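/- arXiv:1405.4654 — 2 statements merged into one kernel-verified Lean document; each statement's English description precedes it below -/
import Mathlib

section
/- Let L be a Lie ring acting on a Z_p-module M via ψ: L → End(M) with action length d < p. Then [M, _i exp(L)] = [M, _i L] for all i ≥ 1, where exp(L) denotes the set L with the group action g ↦ exp(ψ)(g) (truncated exponential), and the iterated commutator submodules are defined by [M, exp(L)] = Span{m - exp(ψ)(a)m} and [M, L] = Span{ψ(a)m}. -/
/-!
Write `texp p f = 1 + f + f² r` with `r` a polynomial in `f`; for `f = ψ a` the operator `r`
preserves every `[M, _i L]`. Then `m - exp(ψ a) m = -ψ a (m + ψ a (r m))` gives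
`[U, exp L] ≤ [U, L]` for `U = [M, _i L]`. Conversely `ψ a m = (exp(ψ a) m - m) - ψ a n` with
`n = ψ a (r m) ∈ [M, _(i+1) L]`, so the error term lies one level deeper, and a downward
induction on `i`, starting from `[M, _d L] = 0`, gives `[U, L] ≤ [U, exp L]`.
-/

attribute [local instance 100] LieRing.ofAssociativeRing

/-- Truncated exponential `∑_{k<p} f^k/k!` of an endomorphism of a `ℤ_[p]`-module. -/
noncomputable def texp (p : ℕ) [Fact p.Prime] {M : Type*} [AddCommGroup M] [Module ℤ_[p] M]
    (f : Module.End ℤ_[p] M) : Module.End ℤ_[p] M :=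
  ∑ k ∈ Finset.range p, Ring.inverse ((k.factorial : ℤ_[p])) • f ^ k

/-- Truncated logarithm `∑_{1≤k≤p-1} (-1)^{k+1}(g-1)^k/k`. -/
noncomputable def tlog (p : ℕ) [Fact p.Prime] {M : Type*} [AddCommGroup M] [Module ℤ_[p] M]
    (g : Module.End ℤ_[p] M) : Module.End ℤ_[p] M :=
  ∑ k ∈ Finset.Icc 1 (p - 1), ((-1 : ℤ_[p]) ^ (k + 1) * Ring.inverse ((k : ℤ_[p]))) • (g - 1) ^ k


/-- `[U, L] = Span{a·m : m ∈ U, a ∈ L}`. -/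
noncomputable def lieBr (p : ℕ) [Fact p.Prime] {M L : Type*} [AddCommGroup M] [Module ℤ_[p] M]
    [LieRing L] [LieAlgebra ℤ_[p] L]
    (ψ : L →ₗ⁅ℤ_[p]⁆ Module.End ℤ_[p] M) (U : Submodule ℤ_[p] M) : Submodule ℤ_[p] M :=
  Submodule.span ℤ_[p] {x | ∃ a : L, ∃ m ∈ U, x = ψ a m}

/-- Iterated `[M, _i L]`, with `[M, _0 L] = M`. -/
noncomputable def lieIter (p : ℕ) [Fact p.Prime] {M L : Type*} [AddCommGroup M] [Module ℤ_[p] M]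
    [LieRing L] [LieAlgebra ℤ_[p] L]
    (ψ : L →ₗ⁅ℤ_[p]⁆ Module.End ℤ_[p] M) : ℕ → Submodule ℤ_[p] M
  | 0 => ⊤
  | (i+1) => lieBr p ψ (lieIter p ψ i)


/-- `[U, exp(L)] = Span{m - exp(ψ(a))·m : m ∈ U, a ∈ L}`. -/
noncomputable def expBr (p : ℕ) [Fact p.Prime] {M L : Type*} [AddCommGroup M] [Module ℤ_[p] M]
    [LieRing L] [LieAlgebra ℤ_[p] L]
    (ψ : L →ₗ⁅ℤ_[p]⁆ Module.End ℤ_[p] M) (U : Submodule ℤ_[p] M) : Submodule ℤ_[p] M :=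
  Submodule.span ℤ_[p] {x | ∃ a : L, ∃ m ∈ U, x = m - texp p (ψ a) m}

/-- Iterated `[M, _i exp(L)]`. -/
noncomputable def expIter (p : ℕ) [Fact p.Prime] {M L : Type*} [AddCommGroup M] [Module ℤ_[p] M]
    [LieRing L] [LieAlgebra ℤ_[p] L]
    (ψ : L →ₗ⁅ℤ_[p]⁆ Module.End ℤ_[p] M) : ℕ → Submodule ℤ_[p] M
  | 0 => ⊤
  | (i+1) => expBr p ψ (expIter p ψ i)

noncomputable def texpTail (p : ℕ) [Fact p.Prime] {M : Type*} [AddCommGroup M] [Module ℤ_[p] M]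
    (f : Module.End ℤ_[p] M) : Module.End ℤ_[p] M :=
  ∑ k ∈ Finset.range (p - 2), Ring.inverse (((k + 2).factorial : ℤ_[p])) • f ^ k

theorem texp_eq_one_add_add_sq_mul_texpTail {p : ℕ} [Fact p.Prime] {M : Type*} [AddCommGroup M]
    [Module ℤ_[p] M] (f : Module.End ℤ_[p] M) :
    texp p f = 1 + f + f ^ 2 * texpTail p f := by
  obtain ⟨n, rfl⟩ : ∃ n, p = n + 2 := ⟨p - 2, by have := (Fact.out : p.Prime).two_le; omega⟩
  simp only [texp, texpTail, Finset.sum_range_succ', Finset.mul_sum, mul_smul_comm, ← pow_add,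
    Nat.add_sub_cancel, add_assoc, one_add_one_eq_two, add_comm 2]
  simp only [zero_add, Nat.factorial_zero, Nat.factorial_one, Nat.cast_one, Ring.inverse_one,
    one_smul, pow_zero, pow_one]
  abel

section

variable {p : ℕ} [Fact p.Prime] {M L : Type*} [AddCommGroup M] [Module ℤ_[p] M]
    [LieRing L] [LieAlgebra ℤ_[p] L] (ψ : L →ₗ⁅ℤ_[p]⁆ Module.End ℤ_[p] M)

theorem apply_mem_lieBr {U : Submodule ℤ_[p] M} (a : L) {m : M} (hm : m ∈ U) :
    ψ a m ∈ lieBr p ψ U :=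
  Submodule.subset_span ⟨a, m, hm, rfl⟩

theorem sub_texp_apply_mem_expBr {U : Submodule ℤ_[p] M} (a : L) {m : M} (hm : m ∈ U) :
    m - texp p (ψ a) m ∈ expBr p ψ U :=
  Submodule.subset_span ⟨a, m, hm, rfl⟩

theorem expBr_mono {U V : Submodule ℤ_[p] M} (h : U ≤ V) : expBr p ψ U ≤ expBr p ψ V :=
  Submodule.span_mono fun _ ⟨a, m, hm, hx⟩ => ⟨a, m, h hm, hx⟩

theorem lieIter_antitone : Antitone (lieIter p ψ) := by
  refine antitone_nat_of_succ_le fun i => ?_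
  induction i with
  | zero => exact le_top
  | succ i ih => exact Submodule.span_mono fun _ ⟨a, m, hm, hx⟩ => ⟨a, m, ih hm, hx⟩

theorem apply_mem_lieIter {i : ℕ} (a : L) {m : M} (hm : m ∈ lieIter p ψ i) :
    ψ a m ∈ lieIter p ψ i :=
  lieIter_antitone ψ i.le_succ (apply_mem_lieBr ψ a hm)

theorem texpTail_apply_mem_lieIter {i : ℕ} (a : L) {m : M} (hm : m ∈ lieIter p ψ i) :
    texpTail p (ψ a) m ∈ lieIter p ψ i := by
  rw [texpTail, LinearMap.sum_apply]
  exact Submodule.sum_mem _ fun k _ => Submodule.smul_mem _ _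
    (Module.End.pow_apply_mem_of_forall_mem k (fun _ => apply_mem_lieIter ψ a) m hm)

theorem expBr_lieIter_le_lieBr (i : ℕ) :
    expBr p ψ (lieIter p ψ i) ≤ lieBr p ψ (lieIter p ψ i) := by
  rw [expBr, Submodule.span_le]
  rintro _ ⟨a, m, hm, rfl⟩
  have hsub : m - texp p (ψ a) m = -ψ a (m + ψ a (texpTail p (ψ a) m)) := by
    simp only [texp_eq_one_add_add_sq_mul_texpTail, LinearMap.add_apply, Module.End.one_apply,
      Module.End.mul_apply, pow_two, map_add]
    abel
  rw [SetLike.mem_coe, hsub]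
  exact neg_mem (apply_mem_lieBr ψ a
    (add_mem hm (apply_mem_lieIter ψ a (texpTail_apply_mem_lieIter ψ a hm))))

theorem lieBr_lieIter_le_expBr {d : ℕ} (h : lieIter p ψ d = ⊥) (i : ℕ) :
    lieBr p ψ (lieIter p ψ i) ≤ expBr p ψ (lieIter p ψ i) := by
  induction hdi : d - i generalizing i with
  | zero =>
    have hbot : lieBr p ψ (lieIter p ψ i) ≤ ⊥ := h ▸ lieIter_antitone ψ (by omega : d ≤ i + 1)
    exact hbot.trans bot_le
  | succ _ ih =>
    rw [lieBr, Submodule.span_le]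
    rintro _ ⟨a, m, hm, rfl⟩
    set n := ψ a (texpTail p (ψ a) m)
    have hn : n ∈ lieIter p ψ (i + 1) := apply_mem_lieBr ψ a (texpTail_apply_mem_lieIter ψ a hm)
    have hψ : ψ a m = -(m - texp p (ψ a) m) - ψ a n := by
      simp only [n, texp_eq_one_add_add_sq_mul_texpTail, LinearMap.add_apply,
        Module.End.one_apply, Module.End.mul_apply, pow_two]
      abel
    rw [SetLike.mem_coe, hψ]
    exact sub_mem (neg_mem (sub_texp_apply_mem_expBr ψ a hm))
      (expBr_mono ψ (lieIter_antitone ψ i.le_succ) (ih (i + 1) (by omega) (apply_mem_lieBr ψ a hn)))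

end

theorem stmt8_general {p : ℕ} [Fact p.Prime] {M L : Type*} [AddCommGroup M] [Module ℤ_[p] M]
    [LieRing L] [LieAlgebra ℤ_[p] L] (ψ : L →ₗ⁅ℤ_[p]⁆ Module.End ℤ_[p] M)
    (d : ℕ) (h : lieIter p ψ d = ⊥) :
    ∀ i : ℕ, 1 ≤ i → expIter p ψ i = lieIter p ψ i := by
  suffices ∀ i, expIter p ψ i = lieIter p ψ i from fun i _ => this i
  intro i
  induction i with
  | zero => rfl
  | succ i ih =>
    change expBr p ψ (expIter p ψ i) = lieBr p ψ (lieIter p ψ i)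
    rw [ih]
    exact le_antisymm (expBr_lieIter_le_lieBr ψ i) (lieBr_lieIter_le_expBr ψ h i)

/-- For a Lie action of length `d < p`, `[M, _i exp(L)] = [M, _i L]` for all `i ≥ 1`. -/
theorem stmt8 {p : ℕ} [Fact p.Prime] {M L : Type*} [AddCommGroup M] [Module ℤ_[p] M]
    [LieRing L] [LieAlgebra ℤ_[p] L] (ψ : L →ₗ⁅ℤ_[p]⁆ Module.End ℤ_[p] M)
    (d : ℕ) (hd : d < p) (h : lieIter p ψ d = ⊥) :
    ∀ i : ℕ, 1 ≤ i → expIter p ψ i = lieIter p ψ i :=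
  stmt8_general ψ d h
end

section
/- Let M be a Z_p-module and f, f' nilpotent endomorphisms of M of index < p such that exp(f) = exp(f'), where exp is the truncated exponential Σ_{k=0}^{p-1} (·)^k/k!. Then f = f'. -/
/-! Over any commutative ring in which `n!` is a unit, the truncated series
`E = ∑_{k ≤ n} X^k/k!` and `L = ∑_{1 ≤ k ≤ n} (-1)^(k+1) (X-1)^k/k` satisfy
`L ∘ E ≡ X mod X^(n+1)`. Indeed `E' = E - X^n/n!` and `X L' = 1 - (1-X)^n`, so
`(L ∘ E)' E = E' (1 - (1-E)^n) ≡ E mod X^n`; since `E ≡ 1 mod X` is coprime to `X^n`, this gives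
`(L ∘ E)' ≡ 1 mod X^n`, and as `1, …, n` are units the congruence integrates. For `n = p - 1` over
`ℤ_[p]`, evaluating at `f` with `f^p = 0` yields `tlog (texp f) = f`. -/

open Polynomial Finset
open scoped Nat

theorem isUnit_natCast_of_isUnit_factorial {R : Type*} [CommRing R] {n : ℕ}
    (h : IsUnit (n ! : R)) {k : ℕ} (hk : 0 < k) (hkn : k ≤ n) : IsUnit (k : R) :=
  isUnit_of_dvd_unit (Nat.cast_dvd_cast (Nat.dvd_factorial hk hkn)) h

namespace Polynomial

variable (R : Type*) [CommRing R]

noncomputable def expTrunc (n : ℕ) : R[X] :=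
  ∑ k ∈ range (n + 1), C (Ring.inverse (k ! : R)) * X ^ k

noncomputable def logTrunc (n : ℕ) : R[X] :=
  ∑ k ∈ Icc 1 n, C ((-1) ^ (k + 1) * Ring.inverse (k : R)) * (X - 1) ^ k

variable {R} {n : ℕ}

theorem derivative_expTrunc (h : IsUnit (n ! : R)) :
    derivative (expTrunc R n) = expTrunc R n - C (Ring.inverse (n ! : R)) * X ^ n := by
  rw [expTrunc]
  conv_rhs => rw [sum_range_succ, add_sub_cancel_right]
  rw [map_sum, sum_range_succ']
  simp only [Nat.factorial_zero, Nat.cast_one, Ring.inverse_one, pow_zero, mul_one,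
    derivative_C, add_zero, derivative_C_mul_X_pow, Nat.add_sub_cancel]
  refine sum_congr rfl fun k hk => ?_
  have hk1 : IsUnit ((k + 1 : ℕ) : R) :=
    isUnit_natCast_of_isUnit_factorial h k.succ_pos (mem_range.1 hk)
  rw [Nat.factorial_succ, Nat.cast_mul, Ring.mul_inverse_rev, mul_assoc,
    Ring.inverse_mul_cancel _ hk1, mul_one]

theorem derivative_logTrunc_mul_X (h : IsUnit (n ! : R)) :
    derivative (logTrunc R n) * X = 1 - (1 - X) ^ n := by
  have hsum : derivative (logTrunc R n) = ∑ i ∈ range n, (1 - X) ^ i := by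
    rw [logTrunc, map_sum, ← Ico_add_one_right_eq_Icc, sum_Ico_eq_sum_range,
      Nat.add_sub_cancel]
    refine sum_congr rfl fun i hi => ?_
    have hi1 : IsUnit ((1 + i : ℕ) : R) :=
      isUnit_natCast_of_isUnit_factorial h (by omega) (by simp at hi; omega)
    rw [← C_1, derivative_C_mul, derivative_X_sub_C_pow, Nat.add_sub_cancel_left, ← mul_assoc,
      ← C_mul, mul_assoc, Ring.inverse_mul_cancel _ hi1, mul_one, C_1,
      show (1 - X : R[X]) = C (-1) * (X - 1) by simp, mul_pow, ← C_pow]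
    congr 2
    ring
  rw [hsum, ← geom_sum_mul_neg, sub_sub_cancel]

theorem eval_zero_expTrunc : (expTrunc R n).eval 0 = 1 := by
  rw [expTrunc, eval_finsetSum, sum_range_succ']
  simp

theorem X_dvd_expTrunc_sub_one : X ∣ expTrunc R n - 1 := by
  simp [X_dvd_iff, coeff_zero_eq_eval_zero, eval_zero_expTrunc]

theorem isCoprime_X_expTrunc : IsCoprime X (expTrunc R n) := by
  obtain ⟨q, hq⟩ := X_dvd_expTrunc_sub_one (R := R) (n := n)
  exact ⟨-q, 1, by linear_combination hq⟩

theorem eval_one_logTrunc : (logTrunc R n).eval 1 = 0 := by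
  refine (eval_finsetSum ..).trans (sum_eq_zero fun k hk => ?_)
  simp [zero_pow (Nat.one_le_iff_ne_zero.1 (mem_Icc.1 hk).1)]

theorem X_pow_succ_dvd_of_X_pow_dvd_derivative (h : IsUnit (n ! : R)) {G : R[X]}
    (h0 : G.coeff 0 = 0) (hG : X ^ n ∣ derivative G) : X ^ (n + 1) ∣ G := by
  rw [X_pow_dvd_iff] at hG ⊢
  rintro (_ | k) hk
  · exact h0
  · have hk1 : IsUnit ((k + 1 : ℕ) : R) :=
      isUnit_natCast_of_isUnit_factorial h k.succ_pos (by omega)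
    have hcoeff := hG k (by omega)
    rw [coeff_derivative, ← Nat.cast_succ] at hcoeff
    exact hk1.mul_left_eq_zero.1 hcoeff

theorem X_pow_dvd_derivative_logTrunc_comp_expTrunc_sub_one (h : IsUnit (n ! : R)) :
    X ^ n ∣ derivative ((logTrunc R n).comp (expTrunc R n)) - 1 := by
  set E := expTrunc R n
  have hL : (derivative (logTrunc R n)).comp E * E = 1 - (1 - E) ^ n := by
    simpa [mul_comp, sub_comp, pow_comp] using congrArg (·.comp E) (derivative_logTrunc_mul_X h)
  have key : (derivative ((logTrunc R n).comp E) - 1) * E =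
      -(C (Ring.inverse (n ! : R)) * X ^ n) - derivative E * (1 - E) ^ n := by
    rw [derivative_comp]
    linear_combination derivative E * hL + derivative_expTrunc h
  refine (isCoprime_X_expTrunc (n := n)).pow_left.dvd_of_dvd_mul_right ?_
  rw [key]
  exact dvd_sub (dvd_neg.2 (dvd_mul_left _ _))
    (dvd_mul_of_dvd_right (pow_dvd_pow_of_dvd (dvd_sub_comm.1 X_dvd_expTrunc_sub_one) n) _)

theorem X_pow_succ_dvd_logTrunc_comp_expTrunc_sub_X (h : IsUnit (n ! : R)) :
    X ^ (n + 1) ∣ (logTrunc R n).comp (expTrunc R n) - X := by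
  refine X_pow_succ_dvd_of_X_pow_dvd_derivative h ?_ ?_
  · rw [coeff_sub, coeff_X_zero, sub_zero, coeff_zero_eq_eval_zero, eval_comp, eval_zero_expTrunc,
      eval_one_logTrunc]
  · simpa using X_pow_dvd_derivative_logTrunc_comp_expTrunc_sub_one h

theorem aeval_logTrunc_aeval_expTrunc {A : Type*} [Ring A] [Algebra R A] (h : IsUnit (n ! : R))
    {a : A} (ha : a ^ (n + 1) = 0) : aeval (aeval a (expTrunc R n)) (logTrunc R n) = a := by
  obtain ⟨q, hq⟩ := X_pow_succ_dvd_logTrunc_comp_expTrunc_sub_X h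
  rw [← aeval_comp, eq_add_of_sub_eq hq, map_add, map_mul, map_pow, aeval_X, ha, zero_mul,
    zero_add]

end Polynomial

namespace PadicInt

variable {p : ℕ} [Fact p.Prime]

theorem isUnit_factorial_of_lt {n : ℕ} (hn : n < p) : IsUnit (n ! : ℤ_[p]) := by
  rw [isUnit_iff, norm_natCast_eq_one_iff]
  exact Nat.Prime.coprime_factorial_of_lt Fact.out hn

end PadicInt

section TruncatedExpLog

variable {p : ℕ} [Fact p.Prime] {M : Type*} [AddCommGroup M] [Module ℤ_[p] M]

theorem texp_eq_aeval_expTrunc (f : Module.End ℤ_[p] M) :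
    texp p f = aeval f (expTrunc ℤ_[p] (p - 1)) := by
  simp [texp, expTrunc, Nat.sub_add_cancel (Fact.out : p.Prime).one_le, Algebra.smul_def]

theorem tlog_eq_aeval_logTrunc (g : Module.End ℤ_[p] M) :
    tlog p g = aeval g (logTrunc ℤ_[p] (p - 1)) := by
  simp [tlog, logTrunc, Algebra.smul_def]

theorem tlog_texp {f : Module.End ℤ_[p] M} (hf : f ^ p = 0) : tlog p (texp p f) = f := by
  have hp : p - 1 + 1 = p := Nat.sub_add_cancel (Fact.out : p.Prime).one_le
  rw [texp_eq_aeval_expTrunc, tlog_eq_aeval_logTrunc]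
  exact aeval_logTrunc_aeval_expTrunc (PadicInt.isUnit_factorial_of_lt (by omega)) (by rwa [hp])

end TruncatedExpLog

/-- Truncated `exp` is injective on nilpotent endomorphisms of index `< p`. -/
theorem stmt12 {p : ℕ} [Fact p.Prime] {M : Type*} [AddCommGroup M] [Module ℤ_[p] M]
    (f f' : Module.End ℤ_[p] M) (hf : f ^ (p - 1) = 0) (hf' : f' ^ (p - 1) = 0)
    (h : texp p f = texp p f') : f = f' := by
  rw [← tlog_texp (pow_eq_zero_of_le (Nat.sub_le p 1) hf),
    ← tlog_texp (pow_eq_zero_of_le (Nat.sub_le p 1) hf'), h]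
end
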